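/- Suppose that for a finite set E of n points in ℝ² and every pair of nonzero reals the number of hinges is at most H·n², and for every nonzero real the number of dot-product pairs is at most S·n^{4/3}. Then for every k ≥ 1 with k ≡ 1 (mod 3) and every k-tuple of nonzero reals (α₁,…,α_k), the number of k-chains of that type in E is at most H^{(k-1)/3}·S·n^{2(k+1)/3}. -/

import Mathlib

/-- The standard dot product on ℝ². -/
def dot (A B : ℝ × ℝ) : ℝ := A.1 * B.1 + A.2 * B.2

/-- The set of k-chains of type τ in E: tuples of k+1 points of E whose consecutive
dot products are prescribed by τ. -/
def chains (E : Finset (ℝ × ℝ)) {k : ℕ} (τ : Fin k → ℝ) : Set (Fin (k + 1) → ℝ × ℝ) :=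
  {R | (∀ i, R i ∈ E) ∧ ∀ j : Fin k, dot (R j.castSucc) (R j.succ) = τ j}

/-!
Deleting every third edge of a `(3m+1)`-chain cuts it into `m` hinges followed by a single
edge, and the chain is determined by these pieces. Hence there are at most
`(H n²)^m · S n^{4/3} = H^m S n^{2(3m+2)/3}` such chains.
-/

section

variable (E : Finset (ℝ × ℝ))

def dotPairs (α : ℝ) : Set ((ℝ × ℝ) × (ℝ × ℝ)) :=
  {p | p.1 ∈ E ∧ p.2 ∈ E ∧ dot p.1 p.2 = α}

def hinges (α₁ α₂ : ℝ) : Set ((ℝ × ℝ) × (ℝ × ℝ) × (ℝ × ℝ)) :=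
  {t | t.1 ∈ E ∧ t.2.1 ∈ E ∧ t.2.2 ∈ E ∧ dot t.1 t.2.1 = α₁ ∧ dot t.2.1 t.2.2 = α₂}

theorem finite_chains {k : ℕ} (τ : Fin k → ℝ) : (chains E τ).Finite :=
  (Set.Finite.pi fun _ ↦ E.finite_toSet).subset fun _ hR i _ ↦ hR.1 i

theorem ncard_chains_one_le (τ : Fin 1 → ℝ) : (chains E τ).ncard ≤ (dotPairs E (τ 0)).ncard := by
  refine Set.ncard_le_ncard_of_injOn (fun R ↦ (R 0, R 1)) (fun R hR ↦ ⟨hR.1 0, hR.1 1, hR.2 0⟩)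
    (fun R _ R' _ h ↦ ?_) ((E.finite_toSet.prod E.finite_toSet).subset fun _ hp ↦ ⟨hp.1, hp.2.1⟩)
  simp only [Prod.mk.injEq] at h
  ext i : 1
  fin_cases i
  exacts [h.1, h.2]

theorem ncard_chains_two_le (τ : Fin 2 → ℝ) :
    (chains E τ).ncard ≤ (hinges E (τ 0) (τ 1)).ncard := by
  refine Set.ncard_le_ncard_of_injOn (fun R ↦ (R 0, R 1, R 2))
    (fun R hR ↦ ⟨hR.1 0, hR.1 1, hR.1 2, hR.2 0, hR.2 1⟩) (fun R _ R' _ h ↦ ?_)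
    ((E.finite_toSet.prod (E.finite_toSet.prod E.finite_toSet)).subset
      fun _ ht ↦ ⟨ht.1, ht.2.1, ht.2.2.1⟩)
  simp only [Prod.mk.injEq] at h
  ext i : 1
  fin_cases i
  exacts [h.1, h.2.1, h.2.2]

/-- Forgetting the edge `R a · R (a + 1)` splits an `(a + 1 + b)`-chain into an `a`-chain and a
`b`-chain. -/
theorem ncard_chains_add_le {a b : ℕ} (τ : Fin (a + 1 + b) → ℝ) :
    (chains E τ).ncard ≤ (chains E fun j : Fin a ↦ τ (Fin.castAdd b j.castSucc)).ncard *
      (chains E fun j : Fin b ↦ τ (Fin.natAdd (a + 1) j)).ncard := by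
  rw [← Set.ncard_prod]
  refine Set.ncard_le_ncard_of_injOn
    (fun R ↦ (fun i ↦ R (Fin.castAdd (b + 1) i), fun i ↦ R (Fin.natAdd (a + 1) i)))
    (fun R hR ↦ ⟨⟨fun i ↦ hR.1 _, fun j ↦ ?_⟩, fun i ↦ hR.1 _, fun j ↦ ?_⟩)
    (fun R _ R' _ h ↦ ?_) ((finite_chains E _).prod (finite_chains E _))
  · convert hR.2 (Fin.castAdd b j.castSucc) using 3 <;> ext <;> simp
  · convert hR.2 (Fin.natAdd (a + 1) j) using 3 <;> ext <;> simp [add_assoc]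
  · simp only [Prod.mk.injEq] at h
    rw [← Fin.append_castAdd_natAdd (m := a + 1) (n := b + 1) (f := R),
      ← Fin.append_castAdd_natAdd (m := a + 1) (n := b + 1) (f := R'), h.1, h.2]

theorem ncard_chains_le_pow_mul {A B : ℝ}
    (h₂ : ∀ τ : Fin 2 → ℝ, (∀ j, τ j ≠ 0) → ((chains E τ).ncard : ℝ) ≤ A)
    (h₁ : ∀ τ : Fin 1 → ℝ, (∀ j, τ j ≠ 0) → ((chains E τ).ncard : ℝ) ≤ B) (m : ℕ) :
    ∀ τ : Fin (3 * m + 1) → ℝ, (∀ j, τ j ≠ 0) → ((chains E τ).ncard : ℝ) ≤ A ^ m * B := by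
  induction m with
  | zero => simpa using h₁
  | succ m ih =>
    rw [show 3 * (m + 1) + 1 = 2 + 1 + (3 * m + 1) by ring]
    intro τ hτ
    have hA : 0 ≤ A := (Nat.cast_nonneg _).trans (h₂ (fun _ ↦ 1) fun _ ↦ one_ne_zero)
    calc ((chains E τ).ncard : ℝ)
        ≤ (chains E fun j : Fin 2 ↦ τ (Fin.castAdd _ j.castSucc)).ncard *
            ((chains E fun j : Fin (3 * m + 1) ↦ τ (Fin.natAdd 3 j)).ncard : ℝ) := by
          exact_mod_cast ncard_chains_add_le E (a := 2) (b := 3 * m + 1) τ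
      _ ≤ A * (A ^ m * B) :=
          mul_le_mul (h₂ _ fun _ ↦ hτ _) (ih _ fun _ ↦ hτ _) (Nat.cast_nonneg _) hA
      _ = A ^ (m + 1) * B := by ring

end

theorem chains_bound_one_mod_three_general (E : Finset (ℝ × ℝ)) (H S : ℝ)
    (hH : ∀ α₁ α₂ : ℝ, α₁ ≠ 0 → α₂ ≠ 0 →
      ({t : (ℝ × ℝ) × (ℝ × ℝ) × (ℝ × ℝ) | t.1 ∈ E ∧ t.2.1 ∈ E ∧ t.2.2 ∈ E ∧
        dot t.1 t.2.1 = α₁ ∧ dot t.2.1 t.2.2 = α₂}.ncard : ℝ) ≤ H * (E.card : ℝ) ^ 2)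
    (hS : ∀ α : ℝ, α ≠ 0 →
      ({p : (ℝ × ℝ) × (ℝ × ℝ) | p.1 ∈ E ∧ p.2 ∈ E ∧ dot p.1 p.2 = α}.ncard : ℝ) ≤
        S * (E.card : ℝ) ^ ((4:ℝ)/3))
    (k : ℕ) (hk3 : k % 3 = 1) (α : Fin k → ℝ) (hα : ∀ j, α j ≠ 0) :
    ((chains E α).ncard : ℝ) ≤ H ^ ((k - 1) / 3) * S * (E.card : ℝ) ^ ((2 * (k + 1) : ℝ) / 3) := by
  obtain ⟨m, rfl⟩ : ∃ m, k = 3 * m + 1 := ⟨k / 3, by omega⟩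
  have h₂ (τ : Fin 2 → ℝ) (hτ : ∀ j, τ j ≠ 0) : ((chains E τ).ncard : ℝ) ≤ H * E.card ^ 2 :=
    (Nat.cast_le.2 (ncard_chains_two_le E τ)).trans (hH _ _ (hτ 0) (hτ 1))
  have h₁ (τ : Fin 1 → ℝ) (hτ : ∀ j, τ j ≠ 0) :
      ((chains E τ).ncard : ℝ) ≤ S * E.card ^ ((4 : ℝ) / 3) :=
    (Nat.cast_le.2 (ncard_chains_one_le E τ)).trans (hS _ (hτ 0))
  have hexp : (E.card : ℝ) ^ ((2 * ((3 * m + 1 : ℕ) + 1) : ℝ) / 3) =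
      (E.card : ℝ) ^ (2 * m) * E.card ^ ((4 : ℝ) / 3) := by
    rw [← Real.rpow_natCast, ← Real.rpow_add' (Nat.cast_nonneg _) (by positivity)]
    push_cast
    ring_nf
  calc ((chains E α).ncard : ℝ) ≤ (H * E.card ^ 2) ^ m * (S * E.card ^ ((4 : ℝ) / 3)) :=
        ncard_chains_le_pow_mul E h₂ h₁ m α hα
    _ = _ := by rw [show (3 * m + 1 - 1) / 3 = m by omega, hexp]; ring

theorem chains_bound_one_mod_three (E : Finset (ℝ × ℝ)) (H S : ℝ)
    (hH : ∀ α₁ α₂ : ℝ, α₁ ≠ 0 → α₂ ≠ 0 →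
      ({t : (ℝ × ℝ) × (ℝ × ℝ) × (ℝ × ℝ) | t.1 ∈ E ∧ t.2.1 ∈ E ∧ t.2.2 ∈ E ∧
        dot t.1 t.2.1 = α₁ ∧ dot t.2.1 t.2.2 = α₂}.ncard : ℝ) ≤ H * (E.card : ℝ) ^ 2)
    (hS : ∀ α : ℝ, α ≠ 0 →
      ({p : (ℝ × ℝ) × (ℝ × ℝ) | p.1 ∈ E ∧ p.2 ∈ E ∧ dot p.1 p.2 = α}.ncard : ℝ) ≤
        S * (E.card : ℝ) ^ ((4:ℝ)/3))
    (k : ℕ) (hk : 1 ≤ k) (hk3 : k % 3 = 1) (α : Fin k → ℝ) (hα : ∀ j, α j ≠ 0) :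
    ((chains E α).ncard : ℝ) ≤ H ^ ((k - 1) / 3) * S * (E.card : ℝ) ^ ((2 * (k + 1) : ℝ) / 3) :=
  chains_bound_one_mod_three_general E H S hH hS k hk3 α hα
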